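/- arXiv:math/9206203 — 6 statements merged into one kernel-verified Lean document; each statement's English description precedes it below -/
import Mathlib

section
/- For every integer n ≥ 0, the sum over k from 0 to n of 2(-q^{n+1})^k/(1+q^k) · H_k(q)/H_n(q) equals the sum over k from -n to n of (-q)^{k^2}, as an identity of rational functions in q. -/
/-!
Induction on `n`. The summands `F(n, k)` on the left admit the rational telescoping certificate
`G(n, k) = (1 - q^k) / (1 + q^(n+1)) * F(n, k)`, that is
`F(n+1, k) - F(n, k) = G(n, k+1) - G(n, k)`.
Hence passing from `n` to `n + 1` changes the left side by
`G(n, n+1) - G(n, 0) + F(n+1, n+1) = 2 (-q)^((n+1)^2)`, which is what the new terms `k = ±(n+1)`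
add on the right.
-/

open Finset

/-- The formal variable q as a rational function. -/
noncomputable def q : RatFunc ℚ := RatFunc.X

/-- H n q = prod_{j=1}^n (1+q^j)/(1-q^j). -/
noncomputable def H (n : ℕ) : RatFunc ℚ := ∏ j ∈ Finset.Icc 1 n, (1 + q ^ j) / (1 - q ^ j)

lemma q_pow_ne_C {j : ℕ} (hj : 0 < j) (c : ℚ) : q ^ j ≠ RatFunc.C c := by
  rw [← sub_ne_zero, q, ← RatFunc.algebraMap_X, ← RatFunc.algebraMap_C, ← map_pow,
    ← map_sub]
  exact (map_ne_zero_iff _ (RatFunc.algebraMap_injective ℚ)).2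
    (Polynomial.X_pow_sub_C_ne_zero hj c)

lemma one_sub_q_pow_ne_zero {j : ℕ} (hj : 0 < j) : 1 - q ^ j ≠ 0 := by
  rw [sub_ne_zero, ne_comm]
  simpa using q_pow_ne_C hj 1

lemma one_add_q_pow_ne_zero (j : ℕ) : 1 + q ^ j ≠ 0 := by
  rcases j.eq_zero_or_pos with rfl | hj
  · norm_num
  · rw [add_comm, ← sub_neg_eq_add, sub_ne_zero]
    simpa using q_pow_ne_C hj (-1)

lemma H_ne_zero (n : ℕ) : H n ≠ 0 :=
  prod_ne_zero_iff.2 fun j hj =>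
    div_ne_zero (one_add_q_pow_ne_zero j) (one_sub_q_pow_ne_zero (mem_Icc.1 hj).1)

lemma H_succ (n : ℕ) : H (n + 1) = H n * ((1 + q ^ (n + 1)) / (1 - q ^ (n + 1))) :=
  prod_Icc_succ_top (by omega) _

noncomputable def term (n k : ℕ) : RatFunc ℚ :=
  2 * (-q ^ (n + 1)) ^ k / (1 + q ^ k) * (H k / H n)

noncomputable def certificate (n k : ℕ) : RatFunc ℚ :=
  (1 - q ^ k) / (1 + q ^ (n + 1)) * term n k

lemma term_succ (n k : ℕ) :
    term (n + 1) k = term n k + (certificate n (k + 1) - certificate n k) := by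
  have hk := one_add_q_pow_ne_zero k
  have hk1 := one_add_q_pow_ne_zero (k + 1)
  have hk1' := one_sub_q_pow_ne_zero k.succ_pos
  have hn1 := one_add_q_pow_ne_zero (n + 1)
  have hn1' := one_sub_q_pow_ne_zero n.succ_pos
  have hH := H_ne_zero n
  simp only [certificate, term, H_succ]
  field_simp
  ring

lemma certificate_zero (n : ℕ) : certificate n 0 = 0 := by
  simp [certificate]

lemma certificate_add_term_succ_succ (n : ℕ) :
    certificate n (n + 1) + term (n + 1) (n + 1) = 2 * (-q) ^ ((n + 1) ^ 2) := by
  have hn1 := one_add_q_pow_ne_zero (n + 1)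
  have hn1' := one_sub_q_pow_ne_zero n.succ_pos
  have hH := H_ne_zero n
  simp only [certificate, term, H_succ]
  field_simp
  rw [neg_pow q, neg_one_pow_congr (Nat.even_pow' two_ne_zero)]
  ring

lemma sum_term_succ (n : ℕ) :
    ∑ k ∈ range (n + 2), term (n + 1) k
      = ∑ k ∈ range (n + 1), term n k + 2 * (-q) ^ ((n + 1) ^ 2) := by
  have telescope : ∑ k ∈ range (n + 1), term (n + 1) k
      = ∑ k ∈ range (n + 1), term n k + certificate n (n + 1) := by
    rw [sum_congr rfl fun k _ => term_succ n k, sum_add_distrib, sum_range_sub, certificate_zero,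
      sub_zero]
  rw [sum_range_succ, telescope, ← certificate_add_term_succ_succ, add_assoc]

lemma sum_Icc_neg_natCast_succ {M : Type*} [AddCommMonoid M] (f : ℤ → M)
    (hf : ∀ k, f (-k) = f k) (n : ℕ) :
    ∑ k ∈ Icc (-((n + 1 : ℕ) : ℤ)) ((n + 1 : ℕ) : ℤ), f k
      = ∑ k ∈ Icc (-(n : ℤ)) n, f k + 2 • f ((n + 1 : ℕ) : ℤ) := by
  have hIcc : Icc (-((n + 1 : ℕ) : ℤ)) ((n + 1 : ℕ) : ℤ)
      = insert (-((n + 1 : ℕ) : ℤ)) (insert ((n + 1 : ℕ) : ℤ) (Icc (-(n : ℤ)) n)) := by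
    ext k
    simp only [mem_Icc, mem_insert]
    omega
  rw [hIcc, sum_insert (by simp only [mem_insert, mem_Icc]; omega),
    sum_insert (by simp only [mem_Icc]; omega), hf, two_nsmul]
  abel

theorem four_square_lemma_b (n : ℕ) :
    ∑ k ∈ Finset.range (n + 1), 2 * (-q ^ (n + 1)) ^ k / (1 + q ^ k) * (H k / H n)
      = ∑ k ∈ Finset.Icc (-(n : ℤ)) (n : ℤ), (-q) ^ (k ^ 2) := by
  change ∑ k ∈ range (n + 1), term n k = _
  induction n with
  | zero => norm_num [term, H]
  | succ n ih =>
    rw [sum_term_succ, ih, sum_Icc_neg_natCast_succ _ fun k => by rw [neg_sq], ← Int.natCast_pow,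
      zpow_natCast, nsmul_eq_mul, Nat.cast_ofNat]
end

section
/- As formal power series in q, Σ_{k=-∞}^∞ (-q)^{k^2} = ∏_{j=1}^∞ (1-q^j)/(1+q^j). -/
open Finset PowerSeries

/-- The formal variable as a power series over ℚ. -/
noncomputable def Q : PowerSeries ℚ := PowerSeries.X

/-- psSum f is the formal power series sum_{k=1}^∞ f k; since in all uses below the
k-th term has order at least k, the coefficient of q^n is sum_{k=1}^n coeff n (f k). -/
noncomputable def psSum (f : ℕ → PowerSeries ℚ) : PowerSeries ℚ :=
  PowerSeries.mk fun n => ∑ k ∈ Finset.Icc 1 n, PowerSeries.coeff n (f k)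

/-- psProd f is the formal power series prod_{j=1}^∞ f j; since in all uses below
f j = 1 + O(q^j), the coefficient of q^n is that of prod_{j=1}^n f j. -/
noncomputable def psProd (f : ℕ → PowerSeries ℚ) : PowerSeries ℚ :=
  PowerSeries.mk fun n => PowerSeries.coeff n (∏ j ∈ Finset.Icc 1 n, f j)

/-!
Write `p = -q`. The `q`-binomial theorem in base `p²`, evaluated at `x = p^(2n-1)`, `y = 1`, has
left side `∏_{i<2n} (p^(2n-1) + p^(2i))`; factoring `p^(2i)` out of the factors with `i < n` and
`p^(2n-1)` out of the others shows that it is a monomial times `(-p; p²)_n²`, and cancelling the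
monomial gives the finite Gauss identity
`(-p; p²)_n² = ∑_{k ≤ 2n} [2n, k]_{p²} p^((n-k)²)`.

Now reduce modulo `p^(N+1)` with `N ≤ n`. The terms with `(n-k)² > N` vanish; in the others both
`k` and `2n - k` are at least `N/2`, where `(p²; p²)_m` no longer changes, so
`[2n, k]_{p²} (p²; p²)_n² ≡ (p²; p²)_{2n}`. Multiplying the finite identity by `(p²; p²)_n²` gives
`(-p; p²)_n² (p²; p²)_n² ≡ (p²; p²)_{2n} (1 + 2 ∑_{j=1}^n p^(j²))`. On the product side,
`∏_{j ≤ 2n} (1-q^j)/(1+q^j) · (q²; q²)_{2n} = (q; q)_{2n}² = (q; q²)_n² (q²; q²)_n²`, and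
`(q²; q²)_{2n}` is a unit, so both sides of the theorem agree up to `q^N`.
-/

section GaussianBinomial

variable {R : Type*} [CommRing R]

/-- The `q`-Pochhammer symbol `(a; q)_m`. -/
def qPochhammer (a q : R) (m : ℕ) : R := ∏ i ∈ range m, (1 - a * q ^ i)

theorem qPochhammer_zero (a q : R) : qPochhammer a q 0 = 1 := prod_range_zero _

theorem qPochhammer_succ (a q : R) (m : ℕ) :
    qPochhammer a q (m + 1) = qPochhammer a q m * (1 - a * q ^ m) :=
  prod_range_succ _ _

def qBinom (q : R) : ℕ → ℕ → R
  | _, 0 => 1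
  | 0, _ + 1 => 0
  | m + 1, k + 1 => qBinom q m k + q ^ (k + 1) * qBinom q m (k + 1)

variable (q : R)

@[simp] theorem qBinom_zero_right (m : ℕ) : qBinom q m 0 = 1 := by cases m <;> rfl

theorem qBinom_succ_succ (m k : ℕ) :
    qBinom q (m + 1) (k + 1) = qBinom q m k + q ^ (k + 1) * qBinom q m (k + 1) := rfl

theorem qBinom_eq_zero_of_lt : ∀ {m k : ℕ}, m < k → qBinom q m k = 0
  | 0, _ + 1, _ => rfl
  | m + 1, k + 1, h => by
    rw [qBinom_succ_succ, qBinom_eq_zero_of_lt (by omega), qBinom_eq_zero_of_lt (by omega),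
      mul_zero, add_zero]

theorem qBinom_mul_qPochhammer_mul_qPochhammer :
    ∀ k l : ℕ, qBinom q (k + l) k * qPochhammer q q k * qPochhammer q q l =
      qPochhammer q q (k + l)
  | 0, l => by simp [qPochhammer_zero]
  | k + 1, 0 => by
    have ih := qBinom_mul_qPochhammer_mul_qPochhammer k 0
    simp only [add_zero, qPochhammer_zero, mul_one] at ih ⊢
    rw [qBinom_succ_succ, qBinom_eq_zero_of_lt q k.lt_add_one, qPochhammer_succ]
    linear_combination (1 - q * q ^ k) * ih
  | k + 1, l + 1 => by
    have ih₁ := qBinom_mul_qPochhammer_mul_qPochhammer k (l + 1)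
    have ih₂ := qBinom_mul_qPochhammer_mul_qPochhammer (k + 1) l
    rw [← add_assoc, qPochhammer_succ] at ih₁
    rw [add_right_comm, qPochhammer_succ q q k] at ih₂
    rw [← add_assoc, qBinom_succ_succ, add_right_comm, qPochhammer_succ, qPochhammer_succ q q l,
      qPochhammer_succ q q (k + l + 1)]
    linear_combination (1 - q * q ^ k) * ih₁ + q ^ (k + 1) * (1 - q * q ^ l) * ih₂
termination_by k l => k + l

theorem prod_add_mul_pow_eq_sum_qBinom (x y : R) (m : ℕ) :
    ∏ i ∈ range m, (x + y * q ^ i) =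
      ∑ k ∈ range (m + 1), qBinom q m k * q ^ k.choose 2 * y ^ k * x ^ (m - k) := by
  induction m generalizing y with
  | zero => simp
  | succ m ih =>
    set T : ℕ → R := fun k => qBinom q m k * q ^ k.choose 2 * (y * q) ^ k * x ^ (m - k)
    -- split off the factor `i = 0`: the rest is the case `m` at `y * q`
    have hprod : ∏ i ∈ range (m + 1), (x + y * q ^ i) = (∑ k ∈ range (m + 1), T k) * (x + y) := by
      rw [prod_range_succ', ← ih]
      simp [pow_succ', mul_assoc]
    have hy : ∀ k ∈ range (m + 1), T k * y =
        qBinom q m k * q ^ (k + 1).choose 2 * y ^ (k + 1) * x ^ (m + 1 - (k + 1)) := by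
      intro k _
      simp only [T, Nat.choose_succ_succ, Nat.choose_one_right, Nat.add_sub_add_right]
      ring
    have hx : (∑ k ∈ range (m + 1), T k) * x = ∑ k ∈ range (m + 1),
        q ^ (k + 1) * qBinom q m (k + 1) * q ^ (k + 1).choose 2 * y ^ (k + 1) *
          x ^ (m + 1 - (k + 1)) + x ^ (m + 1) := by
      conv_lhs => rw [sum_mul, sum_range_succ']
      rw [sum_range_succ, qBinom_eq_zero_of_lt q m.lt_add_one]
      congr 1
      · simp only [mul_zero, zero_mul, add_zero]
        refine sum_congr rfl fun k hk => ?_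
        have hxk : x ^ (m - (k + 1)) * x = x ^ (m + 1 - (k + 1)) := by
          rw [← pow_succ]; congr 1; simp only [mem_range] at hk; omega
        simp only [T, ← hxk]
        ring
      · simp [T, pow_succ]
    rw [hprod, mul_add, hx, sum_mul, sum_congr rfl hy, sum_range_succ' _ (m + 1)]
    simp only [qBinom_succ_succ, add_mul, sum_add_distrib, qBinom_zero_right,
      Nat.choose_zero_succ, pow_zero, mul_one, Nat.sub_zero]
    ring

theorem qPochhammer_self_two_mul (n : ℕ) :
    qPochhammer q q (2 * n) = qPochhammer q (q ^ 2) n * qPochhammer (q ^ 2) (q ^ 2) n := by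
  induction n with
  | zero => simp [qPochhammer]
  | succ n ih =>
    rw [mul_add_one, qPochhammer_succ, qPochhammer_succ, ih, qPochhammer_succ, qPochhammer_succ]
    ring

theorem qPochhammer_mul_qPochhammer_neg (m : ℕ) :
    qPochhammer q q m * qPochhammer (-q) q m = qPochhammer (q ^ 2) (q ^ 2) m := by
  simp only [qPochhammer, ← prod_mul_distrib]
  exact prod_congr rfl fun i _ => by ring

end GaussianBinomial

section FiniteGauss

variable {R : Type*} [CommRing R]

theorem two_mul_choose_two_add_eq (n k : ℕ) (hk : k ≤ 2 * n) :
    2 * k.choose 2 + (2 * n - 1) * (2 * n - k) =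
      n * (n - 1) + n * (2 * n - 1) + Nat.dist n k ^ 2 := by
  rw [Nat.choose_two_right, Nat.mul_div_cancel' (Nat.even_mul_pred_self k).two_dvd]
  rcases Nat.eq_zero_or_pos n with rfl | hn
  · simp_all
  rcases Nat.eq_zero_or_pos k with rfl | hk0
  · rw [Nat.dist_comm, Nat.dist_zero_left, Nat.sub_zero]
    zify [hn, (by omega : 1 ≤ 2 * n)]
    ring
  rcases le_total k n with h | h
  · rw [Nat.dist_eq_sub_of_le_right h]
    zify [h, hk, hn, hk0, (by omega : 1 ≤ 2 * n)]
    ring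
  · rw [Nat.dist_eq_sub_of_le h]
    zify [h, hk, hn, hk0, (by omega : 1 ≤ 2 * n)]
    ring

theorem prod_range_two_mul_pow_add_pow (p : R) (n : ℕ) :
    ∏ i ∈ range (2 * n), (p ^ (2 * n - 1) + (p ^ 2) ^ i) =
      p ^ (n * (n - 1) + n * (2 * n - 1)) * qPochhammer (-p) (p ^ 2) n ^ 2 := by
  have low : ∀ i ∈ range n, p ^ (2 * n - 1) + (p ^ 2) ^ i =
      (p ^ 2) ^ i * (1 - -p * (p ^ 2) ^ (n - 1 - i)) := by
    intro i hi
    obtain ⟨m, rfl⟩ : ∃ m, n = i + 1 + m := ⟨n - (i + 1), by simp only [mem_range] at hi; omega⟩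
    rw [show 2 * (i + 1 + m) - 1 = 2 * i + 2 * m + 1 by omega, show i + 1 + m - 1 - i = m by omega]
    ring
  have high : ∀ j ∈ range n, p ^ (2 * n - 1) + (p ^ 2) ^ (n + j) =
      p ^ (2 * n - 1) * (1 - -p * (p ^ 2) ^ j) := by
    intro j hj
    obtain ⟨m, rfl⟩ : ∃ m, n = m + 1 := ⟨n - 1, by simp only [mem_range] at hj; omega⟩
    rw [show 2 * (m + 1) - 1 = 2 * m + 1 by omega]
    ring
  rw [show range (2 * n) = range (n + n) by rw [two_mul], prod_range_add, prod_congr rfl low,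
    prod_congr rfl high, prod_mul_distrib, prod_mul_distrib,
    prod_range_reflect (fun i => 1 - -p * (p ^ 2) ^ i), prod_const, card_range,
    prod_pow_eq_pow_sum, ← pow_mul, mul_comm 2, sum_range_id_mul_two, qPochhammer]
  ring

theorem qPochhammer_neg_sq_eq_sum_qBinom [IsDomain R] {p : R} (hp : p ≠ 0) (n : ℕ) :
    qPochhammer (-p) (p ^ 2) n ^ 2 =
      ∑ k ∈ range (2 * n + 1), qBinom (p ^ 2) (2 * n) k * p ^ Nat.dist n k ^ 2 := by
  have h := prod_add_mul_pow_eq_sum_qBinom (p ^ 2) (p ^ (2 * n - 1)) 1 (2 * n)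
  simp only [one_mul, one_pow, mul_one, prod_range_two_mul_pow_add_pow] at h
  refine mul_left_cancel₀ (pow_ne_zero (n * (n - 1) + n * (2 * n - 1)) hp) (h.trans ?_)
  rw [mul_sum]
  refine sum_congr rfl fun k hk => ?_
  rw [← pow_mul, ← pow_mul, mul_assoc, ← pow_add,
    two_mul_choose_two_add_eq n k (by simp only [mem_range] at hk; omega), pow_add]
  ring

end FiniteGauss

theorem sum_range_dist_eq {M : Type*} [AddCommMonoid M] (f : ℕ → M) (n : ℕ) :
    ∑ k ∈ range (2 * n + 1), f (Nat.dist n k) = f 0 + 2 • ∑ j ∈ Icc 1 n, f j := by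
  have left : ∑ k ∈ range n, f (Nat.dist n k) = ∑ j ∈ range n, f (j + 1) := by
    rw [← sum_range_reflect]
    refine sum_congr rfl fun j hj => ?_
    rw [Nat.dist_eq_sub_of_le_right (by omega)]
    congr 1
    simp only [mem_range] at hj
    omega
  have right : ∑ j ∈ range (n + 1), f (Nat.dist n (n + j)) = f 0 + ∑ j ∈ range n, f (j + 1) := by
    simp [Nat.dist_eq_sub_of_le, sum_range_succ', add_comm]
  rw [show 2 * n + 1 = n + (n + 1) by omega, sum_range_add, left, right, ← Ico_add_one_right_eq_Icc,
    sum_Ico_eq_sum_range]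
  simp only [add_tsub_cancel_right, add_comm 1, two_nsmul]
  abel

theorem prod_Icc_one_eq_prod_range {M : Type*} [CommMonoid M] (f : ℕ → M) (m : ℕ) :
    ∏ j ∈ Icc 1 m, f j = ∏ i ∈ range m, f (i + 1) := by
  rw [← Ico_add_one_right_eq_Icc, prod_Ico_eq_prod_range, add_tsub_cancel_right]
  simp only [add_comm 1]

section Truncation

variable {R : Type*} [CommRing R]

theorem mk_qPochhammer_eq_of_le {I : Ideal R} {a q : R} {m n : ℕ} (h : a * q ^ m ∈ I)
    (hmn : m ≤ n) :
    Ideal.Quotient.mk I (qPochhammer a q n) = Ideal.Quotient.mk I (qPochhammer a q m) := by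
  induction n, hmn using Nat.le_induction with
  | base => rfl
  | succ n hmn ih =>
    have hn : a * q ^ n ∈ I := by
      rw [← Nat.add_sub_cancel' hmn, pow_add, ← mul_assoc]
      exact I.mul_mem_right _ h
    rw [qPochhammer_succ, map_mul, ih, map_sub, Ideal.Quotient.eq_zero_iff_mem.2 hn, sub_zero,
      map_one, mul_one]

variable {I : Ideal R} {p : R} {N : ℕ}

theorem mk_qBinom_mul_sq_mul_pow_dist (hp : p ^ (N + 1) ∈ I) {n k : ℕ} (hNn : N ≤ n)
    (hk : k ≤ 2 * n) :
    Ideal.Quotient.mk I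
        (qBinom (p ^ 2) (2 * n) k * qPochhammer (p ^ 2) (p ^ 2) n ^ 2 * p ^ Nat.dist n k ^ 2) =
      Ideal.Quotient.mk I (qPochhammer (p ^ 2) (p ^ 2) (2 * n) * p ^ Nat.dist n k ^ 2) := by
  by_cases hd : N + 1 ≤ Nat.dist n k ^ 2
  · simp [Ideal.Quotient.eq_zero_iff_mem.2 (I.pow_mem_of_pow_mem hp hd)]
  have hdN : 2 * Nat.dist n k ≤ N + 1 := by nlinarith
  have hE : ∀ m, N / 2 ≤ m → Ideal.Quotient.mk I (qPochhammer (p ^ 2) (p ^ 2) m) =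
      Ideal.Quotient.mk I (qPochhammer (p ^ 2) (p ^ 2) (N / 2)) := by
    refine fun m hm => mk_qPochhammer_eq_of_le ?_ hm
    rw [← pow_mul, ← pow_add]
    exact I.pow_mem_of_pow_mem hp (by omega)
  have hbinom := congrArg (Ideal.Quotient.mk I)
    (qBinom_mul_qPochhammer_mul_qPochhammer (p ^ 2) k (2 * n - k))
  unfold Nat.dist at hdN
  rw [Nat.add_sub_cancel' hk, map_mul, map_mul, hE k (by omega), hE (2 * n - k) (by omega),
    hE (2 * n) (by omega)] at hbinom
  simp only [map_mul, map_pow, hE n (by omega), hE (2 * n) (by omega)]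
  linear_combination Ideal.Quotient.mk I p ^ Nat.dist n k ^ 2 * hbinom

theorem mk_qPochhammer_neg_sq_mul_sq [IsDomain R] (hp0 : p ≠ 0) (hp : p ^ (N + 1) ∈ I) {n : ℕ}
    (hNn : N ≤ n) :
    Ideal.Quotient.mk I (qPochhammer (-p) (p ^ 2) n ^ 2 * qPochhammer (p ^ 2) (p ^ 2) n ^ 2) =
      Ideal.Quotient.mk I
        (qPochhammer (p ^ 2) (p ^ 2) (2 * n) * (1 + 2 * ∑ j ∈ Icc 1 n, p ^ j ^ 2)) := by
  have hsum : ∑ k ∈ range (2 * n + 1), p ^ Nat.dist n k ^ 2 =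
      1 + 2 * ∑ j ∈ Icc 1 n, p ^ j ^ 2 := by
    rw [sum_range_dist_eq (fun j => p ^ j ^ 2), two_nsmul, two_mul]
    simp
  rw [qPochhammer_neg_sq_eq_sum_qBinom hp0, ← hsum, sum_mul, mul_sum, map_sum, map_sum]
  refine sum_congr rfl fun k hk => ?_
  rw [← mk_qBinom_mul_sq_mul_pow_dist hp hNn (by simp only [mem_range] at hk; omega)]
  ring_nf

end Truncation

theorem Ideal.Quotient.mk_span_X_pow_eq_iff {R : Type*} [CommRing R] {n : ℕ} {f g : R⟦X⟧} :
    Ideal.Quotient.mk (Ideal.span {X ^ n}) f = Ideal.Quotient.mk (Ideal.span {X ^ n}) g ↔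
      ∀ m < n, coeff m f = coeff m g := by
  simp only [Ideal.Quotient.eq, Ideal.mem_span_singleton, X_pow_dvd_iff, map_sub, sub_eq_zero]

section Field

variable {K : Type*} [Field K]

theorem prod_Icc_one_sub_mul_inv_one_add_mul_qPochhammer (m : ℕ) :
    (∏ j ∈ Icc 1 m, (1 - X ^ j) * (1 + X ^ j)⁻¹) * qPochhammer (X ^ 2) (X ^ 2) m =
      qPochhammer (X : K⟦X⟧) X m ^ 2 := by
  rw [← qPochhammer_mul_qPochhammer_neg, mul_left_comm, sq]
  congr 1
  rw [prod_Icc_one_eq_prod_range, qPochhammer, qPochhammer, ← prod_mul_distrib]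
  refine prod_congr rfl fun i _ => ?_
  have h : (1 + X ^ (i + 1) : K⟦X⟧)⁻¹ * (1 + X ^ (i + 1)) = 1 :=
    PowerSeries.inv_mul_cancel _ (by simp)
  linear_combination (1 - X ^ (i + 1) : K⟦X⟧) * h

theorem X_pow_dvd_one_sub_mul_inv_one_add_sub_one (j : ℕ) :
    (X : K⟦X⟧) ^ j ∣ (1 - X ^ j) * (1 + X ^ j)⁻¹ - 1 := by
  rcases j with _ | j
  · simp
  have h : (1 + X ^ (j + 1) : K⟦X⟧) * (1 + X ^ (j + 1))⁻¹ = 1 :=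
    PowerSeries.mul_inv_cancel _ (by simp)
  exact ⟨-2 * (1 + X ^ (j + 1))⁻¹, by linear_combination h⟩

theorem mk_prod_Icc_one_sub_mul_inv_one_add {N n : ℕ} (hNn : N ≤ n) :
    Ideal.Quotient.mk (Ideal.span {X ^ (N + 1)})
        (∏ j ∈ Icc 1 (2 * n), (1 - X ^ j) * (1 + X ^ j)⁻¹) =
      Ideal.Quotient.mk (Ideal.span {X ^ (N + 1)})
        (1 + 2 * ∑ j ∈ Icc 1 n, (-X : K⟦X⟧) ^ j ^ 2) := by
  have htrunc := mk_qPochhammer_neg_sq_mul_sq (I := Ideal.span {(X : K⟦X⟧) ^ (N + 1)})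
    (neg_ne_zero.2 X_ne_zero) (Ideal.mem_span_singleton.2 (by simp)) hNn
  rw [neg_neg, neg_sq] at htrunc
  set π := Ideal.Quotient.mk (Ideal.span {(X : K⟦X⟧) ^ (N + 1)})
  have hunit : IsUnit (π (qPochhammer (X ^ 2) (X ^ 2) (2 * n))) := by
    refine (isUnit_iff_constantCoeff.2 ?_).map π
    simp [qPochhammer, map_prod]
  refine hunit.mul_right_cancel ?_
  rw [← map_mul, ← map_mul, mul_comm (1 + _), ← htrunc,
    prod_Icc_one_sub_mul_inv_one_add_mul_qPochhammer, qPochhammer_self_two_mul, mul_pow]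

end Field

theorem mk_psSum_eq {f : ℕ → ℚ⟦X⟧} (hf : ∀ k, X ^ k ∣ f k) {N M : ℕ} (hNM : N ≤ M) :
    Ideal.Quotient.mk (Ideal.span {X ^ (N + 1)}) (psSum f) =
      Ideal.Quotient.mk (Ideal.span {X ^ (N + 1)}) (∑ k ∈ Icc 1 M, f k) := by
  refine Ideal.Quotient.mk_span_X_pow_eq_iff.2 fun m hm => ?_
  rw [psSum, coeff_mk, map_sum]
  refine sum_subset (Icc_subset_Icc_right (show m ≤ M by omega)) fun k hkM hk => ?_
  exact X_pow_dvd_iff.1 (hf k) m (by simp only [mem_Icc] at hkM hk; omega)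

theorem mk_psProd_eq {f : ℕ → ℚ⟦X⟧} (hf : ∀ j, X ^ j ∣ f j - 1) {N M : ℕ} (hNM : N ≤ M) :
    Ideal.Quotient.mk (Ideal.span {X ^ (N + 1)}) (psProd f) =
      Ideal.Quotient.mk (Ideal.span {X ^ (N + 1)}) (∏ j ∈ Icc 1 M, f j) := by
  refine Ideal.Quotient.mk_span_X_pow_eq_iff.2 fun m hm => ?_
  rw [psProd, coeff_mk]
  refine Ideal.Quotient.mk_span_X_pow_eq_iff.1 ?_ m m.lt_add_one
  rw [map_prod, map_prod]
  refine prod_subset (Icc_subset_Icc_right (show m ≤ M by omega)) fun j hjM hj => ?_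
  rw [← map_one (Ideal.Quotient.mk _), Ideal.Quotient.eq, Ideal.mem_span_singleton]
  exact (pow_dvd_pow X (by simp only [mem_Icc] at hjM hj; omega)).trans (hf j)

theorem identity_b_limit :
    1 + 2 * psSum (fun k => (-Q) ^ (k ^ 2))
      = psProd (fun j => (1 - Q ^ j) * (1 + Q ^ j)⁻¹) := by
  unfold Q
  ext N
  have hθ (k : ℕ) : X ^ k ∣ (-X : ℚ⟦X⟧) ^ k ^ 2 :=
    (pow_dvd_pow_of_dvd (dvd_neg.2 dvd_rfl) k).trans (pow_dvd_pow _ (Nat.le_self_pow two_ne_zero k))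
  refine Ideal.Quotient.mk_span_X_pow_eq_iff.1 ?_ N N.lt_add_one
  rw [map_add, map_mul, mk_psSum_eq hθ le_rfl, ← map_mul, ← map_add,
    mk_psProd_eq X_pow_dvd_one_sub_mul_inv_one_add_sub_one (by omega : N ≤ 2 * N)]
  exact (mk_prod_Icc_one_sub_mul_inv_one_add le_rfl).symm
end

section
/- For every positive integer n, the coefficient of q^n in the formal power series Σ_{k=1}^∞ q^k/(1+(-q)^k)^2 equals Σ_{r | n} (-1)^{(r+1)(n/r+1)} · r. -/
open Finset PowerSeries

/-! Since `X / (1 - X)^2 = ∑ r X^r`, rescaling by `-1` gives `z / (1 + z)^2 = ∑ (-1)^(r+1) r z^r`.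
Substituting `z = (-q)^k` and using `q^k = (-1)^k z`, the `k`-th term contributes
`(-1)^(k + kr + r + 1) r = (-1)^((k+1)(r+1)) r` to the coefficient of `q^(kr)`; summing over the
factorisations `n = k r` gives the divisor sum. -/

theorem mk_neg_one_pow_mul_mul_one_add_X_sq {R : Type*} [CommRing R] :
    (PowerSeries.mk fun r => (-1 : R) ^ (r + 1) * r) * (1 + X) ^ 2 = X := by
  have hX : X * (PowerSeries.mk fun n => ((1 + n).choose 1 : R)) =
      PowerSeries.mk fun r => (r : R) := by
    ext (_ | r)
    · simp
    · rw [coeff_succ_X_mul]; simp [add_comm]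
  have h := congrArg (rescale (-1 : R) ∘ (X * ·)) (mk_add_choose_mul_one_sub_pow_eq_one (S := R) 1)
  simp only [Function.comp_apply, mul_one, ← mul_assoc, hX, map_mul, map_pow, map_sub, map_one,
    rescale_X, rescale_mk, map_neg, neg_one_mul, sub_neg_eq_add] at h
  have hneg : (PowerSeries.mk fun r => (-1 : R) ^ (r + 1) * r) =
      -PowerSeries.mk fun r => (-1 : R) ^ r * r := by
    ext; simp [pow_succ]
  rw [hneg]
  linear_combination -h

theorem coeff_X_pow_mul_inv_one_add_neg_X_pow_sq {K : Type*} [Field K] {k : ℕ} (hk : k ≠ 0)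
    (n : ℕ) : coeff n (X ^ k * ((1 + (-X) ^ k) ^ 2)⁻¹ : K⟦X⟧) =
      if k ∣ n then (-1 : K) ^ ((k + 1) * (n / k + 1)) * (n / k : ℕ) else 0 := by
  set G : K⟦X⟧ := PowerSeries.mk fun r => (-1 : K) ^ (r + 1) * r
  set φ : K⟦X⟧ →+* K⟦X⟧ := (rescale (-1 : K)).comp (expand k hk).toRingHom
  have hφX : φ X = (-X) ^ k := by simp [φ, rescale_X]
  have hterm : X ^ k * ((1 + (-X) ^ k) ^ 2)⁻¹ = C ((-1) ^ k) * φ G := by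
    rw [eq_comm, PowerSeries.eq_mul_inv_iff_mul_eq (by simp [hk])]
    calc C ((-1) ^ k) * φ G * (1 + (-X) ^ k) ^ 2
        = C ((-1) ^ k) * φ (G * (1 + X) ^ 2) := by
          rw [map_mul φ, map_pow φ, map_add φ, map_one φ, hφX, mul_assoc]
      _ = X ^ k := by
        rw [mk_neg_one_pow_mul_mul_one_add_X_sq, hφX, neg_pow (X : K⟦X⟧), map_pow, map_neg,
          map_one, ← mul_assoc, ← mul_pow, neg_one_mul, neg_neg, one_pow, one_mul]
  rw [hterm, coeff_C_mul]
  simp only [φ, RingHom.comp_apply, AlgHom.toRingHom_eq_coe, RingHom.coe_coe, coeff_rescale,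
    coeff_expand]
  split_ifs with hdvd
  · obtain ⟨r, rfl⟩ := hdvd
    simp only [G, coeff_mk, Nat.mul_div_cancel_left r (Nat.pos_of_ne_zero hk)]
    ring
  · simp

theorem coeff_lambert_sum_general (n : ℕ) :
    PowerSeries.coeff n (psSum (fun k => Q ^ k * ((1 + (-Q) ^ k) ^ 2)⁻¹))
      = ∑ r ∈ n.divisors, (-1 : ℚ) ^ ((r + 1) * (n / r + 1)) * r := by
  calc PowerSeries.coeff n (psSum (fun k => Q ^ k * ((1 + (-Q) ^ k) ^ 2)⁻¹))
      = ∑ k ∈ Icc 1 n, if k ∣ n then (-1 : ℚ) ^ ((k + 1) * (n / k + 1)) * (n / k : ℕ) else 0 := by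
        rw [psSum, coeff_mk]
        exact sum_congr rfl fun k hk =>
          coeff_X_pow_mul_inv_one_add_neg_X_pow_sq (Nat.one_le_iff_ne_zero.1 (mem_Icc.1 hk).1) n
    _ = ∑ k ∈ n.divisors, (-1 : ℚ) ^ ((k + 1) * (n / k + 1)) * (n / k : ℕ) := by
        rw [Nat.divisors, Ico_add_one_right_eq_Icc, sum_filter]
    _ = ∑ r ∈ n.divisors, (-1 : ℚ) ^ ((r + 1) * (n / r + 1)) * r := by
        rw [← Nat.sum_div_divisors]
        refine sum_congr rfl fun r hr => ?_
        rw [Nat.div_div_self (Nat.dvd_of_mem_divisors hr) (Nat.mem_divisors.1 hr).2,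
          mul_comm (n / r + 1)]

theorem coeff_lambert_sum (n : ℕ) (hn : 0 < n) :
    PowerSeries.coeff n (psSum (fun k => Q ^ k * ((1 + (-Q) ^ k) ^ 2)⁻¹))
      = ∑ r ∈ n.divisors, (-1 : ℚ) ^ ((r + 1) * (n / r + 1)) * r :=
  coeff_lambert_sum_general n
end

section
/- For every positive integer n, Σ_{r | n} (-1)^{(r+1)(n/r+1)} · r equals the sum of the divisors d of n such that 4 does not divide d. -/
theorem signed_divisor_sum (n : ℕ) (hn : 0 < n) :
    (∑ r ∈ n.divisors, (-1 : ℤ) ^ ((r + 1) * (n / r + 1)) * r)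
      = ∑ d ∈ n.divisors.filter (fun d => ¬ (4 ∣ d)), (d : ℤ) := by
  classical
  have hsign : ∀ r ∈ n.divisors,
      (-1 : ℤ) ^ ((r + 1) * (n / r + 1)) * r
        = (if 2 ∣ r ∧ 2 ∣ (n / r) then (-1 : ℤ) else 1) * r := by
    intro r hr
    congr 1
    rcases Nat.even_or_odd r with h1 | h1 <;> rcases Nat.even_or_odd (n / r) with h2 | h2
    · rw [if_pos ⟨h1.two_dvd, h2.two_dvd⟩]
      have : Odd ((r + 1) * (n / r + 1)) := (Even.add_one h1).mul (Even.add_one h2)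
      exact this.neg_one_pow
    · rw [if_neg (by simp [Nat.odd_iff, Nat.even_iff] at h2 ⊢; omega)]
      have : Even ((r + 1) * (n / r + 1)) := (Odd.add_one h2).mul_left _
      exact this.neg_one_pow
    · rw [if_neg (by simp [Nat.odd_iff, Nat.even_iff] at h1 ⊢; omega)]
      have : Even ((r + 1) * (n / r + 1)) := (Odd.add_one h1).mul_right _
      exact this.neg_one_pow
    · rw [if_neg (by simp [Nat.odd_iff, Nat.even_iff] at h1 ⊢; omega)]
      have : Even ((r + 1) * (n / r + 1)) := (Odd.add_one h1).mul_right _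
      exact this.neg_one_pow
  rw [Finset.sum_congr rfl hsign]
  have hsplit := Finset.sum_filter_add_sum_filter_not n.divisors
      (fun r => 2 ∣ r ∧ 2 ∣ (n / r)) (fun r => (if 2 ∣ r ∧ 2 ∣ (n / r) then (-1 : ℤ) else 1) * r)
  rw [← hsplit]
  have h1 : ∑ r ∈ n.divisors.filter (fun r => 2 ∣ r ∧ 2 ∣ (n / r)),
      (if 2 ∣ r ∧ 2 ∣ (n / r) then (-1 : ℤ) else 1) * r
      = - ∑ r ∈ n.divisors.filter (fun r => 2 ∣ r ∧ 2 ∣ (n / r)), (r : ℤ) := by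
    rw [← Finset.sum_neg_distrib]
    apply Finset.sum_congr rfl
    intro r hr
    simp only [Finset.mem_filter] at hr
    rw [if_pos hr.2]; ring
  have h2 : ∑ r ∈ n.divisors.filter (fun r => ¬(2 ∣ r ∧ 2 ∣ (n / r))),
      (if 2 ∣ r ∧ 2 ∣ (n / r) then (-1 : ℤ) else 1) * r
      = ∑ r ∈ n.divisors.filter (fun r => ¬(2 ∣ r ∧ 2 ∣ (n / r))), (r : ℤ) := by
    apply Finset.sum_congr rfl
    intro r hr
    simp only [Finset.mem_filter] at hr
    rw [if_neg hr.2]; ring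
  rw [h1, h2]
  -- key bijection: sum over {4 ∣ d} = 2 * sum over A
  have key : ∑ d ∈ n.divisors.filter (fun d => 4 ∣ d), (d : ℤ)
      = 2 * ∑ r ∈ n.divisors.filter (fun r => 2 ∣ r ∧ 2 ∣ (n / r)), (r : ℤ) := by
    rw [Finset.mul_sum]
    apply Finset.sum_nbij' (i := fun d => d / 2) (j := fun r => 2 * r)
    · intro d hd
      simp only [Finset.mem_filter, Nat.mem_divisors] at hd ⊢
      obtain ⟨⟨hdn, hn0⟩, k, hk⟩ := hd
      subst hk
      have hk0 : 0 < k := by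
        rcases Nat.eq_zero_or_pos k with h | h
        · subst h; simp at hdn; omega
        · exact h
      obtain ⟨m, hm⟩ := hdn
      rw [show 4 * k / 2 = 2 * k by omega]
      refine ⟨⟨⟨2 * m, by rw [hm]; ring⟩, hn0⟩, ⟨k, rfl⟩, ?_⟩
      have hdiv : n / (2 * k) = 2 * m := by
        rw [hm, show 4 * k * m = 2 * k * (2 * m) by ring]
        exact Nat.mul_div_cancel_left _ (by omega)
      rw [hdiv]
      exact ⟨m, rfl⟩
    · intro r hr
      simp only [Finset.mem_filter, Nat.mem_divisors] at hr ⊢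
      obtain ⟨⟨hrn, hn0⟩, ⟨a, ha⟩, hb⟩ := hr
      have hr0 : 0 < r := Nat.pos_of_dvd_of_pos hrn hn
      obtain ⟨m, hm⟩ := hrn
      rw [hm, Nat.mul_div_cancel_left _ hr0] at hb
      obtain ⟨b, hbb⟩ := hb
      refine ⟨⟨⟨b, by rw [hm, hbb]; ring⟩, hn0⟩, ⟨a, by omega⟩⟩
    · intro d hd
      simp only [Finset.mem_filter, Nat.mem_divisors] at hd
      obtain ⟨_, k, hk⟩ := hd
      omega
    · intro r hr; omega
    · intro d hd
      simp only [Finset.mem_filter, Nat.mem_divisors] at hd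
      obtain ⟨_, k, hk⟩ := hd
      omega
  -- now relate the RHS
  have hrhs : ∑ d ∈ n.divisors.filter (fun d => ¬ (4 ∣ d)), (d : ℤ)
      = (∑ d ∈ n.divisors, (d : ℤ)) - ∑ d ∈ n.divisors.filter (fun d => 4 ∣ d), (d : ℤ) := by
    have := Finset.sum_filter_add_sum_filter_not n.divisors (fun d => 4 ∣ d) (fun d => (d : ℤ))
    linarith
  have htot : (∑ d ∈ n.divisors, (d : ℤ))
      = (∑ r ∈ n.divisors.filter (fun r => 2 ∣ r ∧ 2 ∣ (n / r)), (r : ℤ))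
        + ∑ r ∈ n.divisors.filter (fun r => ¬(2 ∣ r ∧ 2 ∣ (n / r))), (r : ℤ) :=
    (Finset.sum_filter_add_sum_filter_not n.divisors _ _).symm
  rw [hrhs, key, htot]
  ring
end

section
/- For every positive integer n, the number of quadruples (x₁,x₂,x₃,x₄) of integers with x₁² + x₂² + x₃² + x₄² = n equals 8 times the sum of the positive divisors of n that are not divisible by 4. -/
/-!
Writing `x₁² + x₂²` and `x₃² + x₄²` as norms of Gaussian integers gives
`r₄(n) = ∑_{u + v = n} r₂(u) r₂(v)`. By the arithmetic of `ℤ[i]`, `r₂(u)/4` and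
`E(u) = ∑_{d ∣ u} χ₄(d)` obey the same recursion along the prime factors of `u`, so
`r₂(u) = 4 E(u)` for `u > 0` (Jacobi's two-square theorem). Expanding the divisor sums,
`r₄(n) = 8 E(n) + 16 ∑_{ax + by = n} χ₄(ab)`, and the last sum is evaluated by Liouville's
method: if `F` is the partial-sum function of `χ₄`, then `χ₄(ab) = F(ab) - F((a - b)b)` for
`a > b`, so the substitutions `(a, x, b, y) ↦ (a - b, x, b, x + y)` make the sum telescope onto
the diagonal `x = y`, where it equals `(∑_{d ∣ n, 4 ∤ d} d - E(n)) / 2`.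
-/

open Finset ZMod ArithmeticFunction

local notation "ℤ[i]" => GaussianInt

/-- The recursion satisfied by the coefficients of `ζ(s) L(s, c)` when `c` is completely
multiplicative; it determines `f n` for `n > 0` from `f 1`. -/
structure SatisfiesEulerRecursion (c f : ℕ → ℤ) : Prop where
  mul_of_not_dvd : ∀ p m, p.Prime → ¬ p ∣ m → f (p * m) = (1 + c p) * f m
  sq_mul : ∀ p m, p.Prime → f (p ^ 2 * m) + c p * f m = (1 + c p) * f (p * m)

namespace SatisfiesEulerRecursion

variable {c f g : ℕ → ℤ}

lemma const_mul (hf : SatisfiesEulerRecursion c f) (a : ℤ) :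
    SatisfiesEulerRecursion c (fun n => a * f n) where
  mul_of_not_dvd p m hp hpm := by rw [hf.mul_of_not_dvd p m hp hpm]; ring
  sq_mul p m hp := by linear_combination a * hf.sq_mul p m hp

theorem eq_of_apply_one_eq (hf : SatisfiesEulerRecursion c f)
    (hg : SatisfiesEulerRecursion c g) (h1 : f 1 = g 1) {n : ℕ} (hn : 0 < n) : f n = g n := by
  induction n using Nat.strong_induction_on with
  | _ n ih =>
  obtain rfl | hn1 := (Nat.one_le_iff_ne_zero.2 hn.ne').eq_or_lt
  · exact h1
  obtain ⟨p, hp, m, hm⟩ : ∃ p, p.Prime ∧ ∃ m, n = p * m :=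
    ⟨n.minFac, Nat.minFac_prime hn1.ne', n.minFac_dvd⟩
  have hm0 : 0 < m := Nat.pos_of_mul_pos_left (hm ▸ hn)
  have hmn : m < n := by rw [hm]; exact (Nat.lt_mul_iff_one_lt_left hm0).2 hp.one_lt
  by_cases hpm : p ∣ m
  · obtain ⟨k, rfl⟩ := hpm
    have hk : 0 < k := Nat.pos_of_mul_pos_left hm0
    have hkn : k < n := lt_of_le_of_lt (Nat.le_mul_of_pos_left k hp.pos) hmn
    have hf2 := hf.sq_mul _ k hp
    have hg2 := hg.sq_mul _ k hp
    have hn2 : n = p ^ 2 * k := by rw [hm]; ring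
    rw [← hn2, ih k hkn hk, ih _ hmn hm0] at hf2
    rw [← hn2] at hg2
    linarith
  · rw [hm, hf.mul_of_not_dvd _ m hp hpm, hg.mul_of_not_dvd _ m hp hpm, ih m hmn hm0]

end SatisfiesEulerRecursion

def chi4DivisorSum : ArithmeticFunction ℤ :=
  (zeta : ArithmeticFunction ℤ) * toArithmeticFunction (χ₄ ·)

lemma isMultiplicative_chi4DivisorSum : chi4DivisorSum.IsMultiplicative :=
  isMultiplicative_zeta.natCast.mul (DirichletCharacter.isMultiplicative_toArithmeticFunction χ₄)

lemma chi4DivisorSum_apply (n : ℕ) : chi4DivisorSum n = ∑ d ∈ n.divisors, χ₄ d := by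
  rw [chi4DivisorSum, coe_zeta_mul_apply]
  exact sum_congr rfl fun d hd => by simp [toArithmeticFunction, (Nat.pos_of_mem_divisors hd).ne']

lemma chi4DivisorSum_prime_pow {p : ℕ} (hp : p.Prime) (k : ℕ) :
    chi4DivisorSum (p ^ k) = ∑ j ∈ range (k + 1), χ₄ p ^ j := by
  rw [chi4DivisorSum_apply, Nat.sum_divisors_prime_pow hp]
  simp only [Nat.cast_pow, map_pow]

lemma chi4DivisorSum_prime_pow_mul {p u : ℕ} (hp : p.Prime) (hu : ¬ p ∣ u) (k : ℕ) :
    chi4DivisorSum (p ^ k * u) = (∑ j ∈ range (k + 1), χ₄ p ^ j) * chi4DivisorSum u := by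
  rw [isMultiplicative_chi4DivisorSum.map_mul_of_coprime
    (Nat.Coprime.pow_left k ((Nat.Prime.coprime_iff_not_dvd hp).2 hu)),
    chi4DivisorSum_prime_pow hp]

lemma satisfiesEulerRecursion_chi4DivisorSum :
    SatisfiesEulerRecursion (fun p => χ₄ p) (fun n => chi4DivisorSum n) where
  mul_of_not_dvd p m hp hpm := by
    simpa [sum_range_succ, add_comm] using chi4DivisorSum_prime_pow_mul hp hpm 1
  sq_mul p m hp := by
    obtain rfl | hm := eq_or_ne m 0
    · simp
    obtain ⟨k, u, hu, rfl⟩ := Nat.exists_eq_pow_mul_and_not_dvd hm p hp.ne_one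
    rw [show p ^ 2 * (p ^ k * u) = p ^ (k + 2) * u by ring,
      show p * (p ^ k * u) = p ^ (k + 1) * u by ring, chi4DivisorSum_prime_pow_mul hp hu,
      chi4DivisorSum_prime_pow_mul hp hu, chi4DivisorSum_prime_pow_mul hp hu]
    simp only [sum_range_succ]
    ring

theorem Nat.card_add_eq_sum_antidiagonal {α β : Type*} (f : α → ℕ) (g : β → ℕ)
    (hf : ∀ k, (f ⁻¹' {k}).Finite) (hg : ∀ k, (g ⁻¹' {k}).Finite) (n : ℕ) :
    Nat.card {q : α × β // f q.1 + g q.2 = n}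
      = ∑ p ∈ antidiagonal n, (f ⁻¹' {p.1}).ncard * (g ⁻¹' {p.2}).ncard := by
  have := fun k => (hf k).to_subtype
  have := fun k => (hg k).to_subtype
  let e : {q : α × β // f q.1 + g q.2 = n} ≃
      Σ p : antidiagonal n, (f ⁻¹' {p.1.1}) × (g ⁻¹' {p.1.2}) :=
    { toFun q := ⟨⟨(f q.1.1, g q.1.2), mem_antidiagonal.2 q.2⟩, ⟨q.1.1, rfl⟩, ⟨q.1.2, rfl⟩⟩
      invFun s := ⟨(s.2.1, s.2.2),
        (congrArg₂ (· + ·) s.2.1.2 s.2.2.2).trans (mem_antidiagonal.1 s.1.2)⟩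
      left_inv q := rfl
      right_inv := by
        rintro ⟨⟨⟨i, j⟩, hij⟩, ⟨a, ha⟩, ⟨b, hb⟩⟩
        obtain rfl : f a = i := ha
        obtain rfl : g b = j := hb
        rfl }
  rw [Nat.card_congr e, Nat.card_sigma, ← sum_coe_sort (antidiagonal n)]
  simp [Nat.card_prod, Nat.card_coe_set_eq]

namespace GaussianInt

def normSet (n : ℕ) : Set ℤ[i] := {z | z.norm = n}

noncomputable def r2 (n : ℕ) : ℕ := (normSet n).ncard

lemma norm_eq_sq_add_sq (z : ℤ[i]) : z.norm = z.re ^ 2 + z.im ^ 2 := by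
  rw [Zsqrtd.norm_def]; ring

lemma abs_re_le_norm (z : ℤ[i]) : |z.re| ≤ z.norm := by
  rw [norm_eq_sq_add_sq, ← Int.natCast_natAbs]
  nlinarith [Int.natAbs_le_self_sq z.re, sq_nonneg z.im]

lemma abs_im_le_norm (z : ℤ[i]) : |z.im| ≤ z.norm := by
  rw [norm_eq_sq_add_sq, ← Int.natCast_natAbs]
  nlinarith [Int.natAbs_le_self_sq z.im, sq_nonneg z.re]

lemma finite_normSet (n : ℕ) : (normSet n).Finite :=
  (((Set.finite_Icc (-(n : ℤ)) n).prod (Set.finite_Icc (-(n : ℤ)) n)).image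
    fun p => (⟨p.1, p.2⟩ : ℤ[i])).subset fun z hz =>
      ⟨(z.re, z.im), ⟨abs_le.1 (hz ▸ abs_re_le_norm z), abs_le.1 (hz ▸ abs_im_le_norm z)⟩, rfl⟩

lemma normSet_zero : normSet 0 = {0} := by
  ext z
  simp [normSet, GaussianInt.norm_eq_zero]

lemma normSet_one : normSet 1 = ↑({1, -1, ⟨0, 1⟩, ⟨0, -1⟩} : Finset ℤ[i]) := by
  ext ⟨x, y⟩
  simp only [normSet, Set.mem_ofPred_eq, Finset.coe_insert, Finset.coe_singleton,
    Set.mem_insert_iff, Set.mem_singleton_iff]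
  refine ⟨fun h => ?_, by rintro (h | h | h | h) <;> rw [h] <;> rfl⟩
  obtain ⟨hx0, hx1⟩ := abs_le.1 (h ▸ abs_re_le_norm ⟨x, y⟩)
  obtain ⟨hy0, hy1⟩ := abs_le.1 (h ▸ abs_im_le_norm ⟨x, y⟩)
  rw [norm_eq_sq_add_sq] at h
  dsimp only at hx0 hx1 hy0 hy1 h
  push_cast at hx0 hx1 hy0 hy1 h
  interval_cases x <;> interval_cases y <;> simp_all [Zsqrtd.ext_iff]

lemma r2_zero : r2 0 = 1 := by simp [r2, normSet_zero]

lemma r2_one : r2 1 = 4 := by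
  rw [r2, normSet_one, Set.ncard_coe_finset]; decide

lemma mul_mem_normSet {π z : ℤ[i]} {k n : ℕ} (hπ : π.norm = k) (hz : z ∈ normSet n) :
    π * z ∈ normSet (k * n) := by
  simp_all [normSet, Zsqrtd.norm_mul]

lemma image_mul_normSet {π : ℤ[i]} {k : ℕ} (hπ : π.norm = k) (hk : k ≠ 0) (n : ℕ) :
    (π * ·) '' normSet n = {z ∈ normSet (k * n) | π ∣ z} := by
  ext z
  constructor
  · rintro ⟨t, ht, rfl⟩
    exact ⟨mul_mem_normSet hπ ht, dvd_mul_right π t⟩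
  · rintro ⟨hz, t, rfl⟩
    refine ⟨t, ?_, rfl⟩
    simp only [normSet, Set.mem_ofPred_eq, Zsqrtd.norm_mul, hπ, Nat.cast_mul] at hz ⊢
    exact mul_left_cancel₀ (by exact_mod_cast hk) hz

lemma ncard_image_mul_normSet {π : ℤ[i]} (hπ : π ≠ 0) (n : ℕ) :
    ((π * ·) '' normSet n).ncard = r2 n :=
  Set.ncard_image_of_injective _ (mul_right_injective₀ hπ)

lemma dvd_of_natCast_dvd_of_mem_normSet {p m : ℕ} (hp : p ≠ 0) {z : ℤ[i]}
    (hz : z ∈ normSet (p * m)) (hpz : (p : ℤ[i]) ∣ z) : p ∣ m := by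
  obtain ⟨t, rfl⟩ := hpz
  simp only [normSet, Set.mem_ofPred_eq, Zsqrtd.norm_mul, Zsqrtd.norm_natCast] at hz
  have h : (p : ℤ) * (p * t.norm) = p * m := by push_cast at hz; linear_combination hz
  exact Int.natCast_dvd_natCast.1 ⟨t.norm, (mul_left_cancel₀ (by exact_mod_cast hp) h).symm⟩

lemma prime_of_norm_prime {π : ℤ[i]} {p : ℕ} (hp : p.Prime) (hπ : π.norm = p) : Prime π := by
  refine irreducible_iff_prime.1 ⟨fun hu => ?_, fun a b hab => ?_⟩
  · have := Zsqrtd.norm_eq_one_iff.2 hu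
    rw [hπ, Int.natAbs_natCast] at this
    exact hp.one_lt.ne' this
  · have : (a.norm.natAbs * b.norm.natAbs).Prime := by
      rwa [← Int.natAbs_mul, ← Zsqrtd.norm_mul, ← hab, hπ, Int.natAbs_natCast]
    rcases Nat.prime_mul_iff.1 this with ⟨-, h⟩ | ⟨-, h⟩
    · exact Or.inr (Zsqrtd.norm_eq_one_iff.1 h)
    · exact Or.inl (Zsqrtd.norm_eq_one_iff.1 h)

lemma dvd_or_star_dvd_of_dvd_norm {π z : ℤ[i]} (hπ : Prime π) (h : π ∣ (z.norm : ℤ[i])) :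
    π ∣ z ∨ star π ∣ z := by
  rw [Zsqrtd.norm_eq_mul_conj] at h
  refine (hπ.dvd_or_dvd h).imp id fun h => ?_
  simpa only [starRingEnd_apply, star_star] using map_dvd (starRingEnd ℤ[i]) h

lemma natCast_dvd_norm_of_mem_normSet {k m : ℕ} {z : ℤ[i]} (hz : z ∈ normSet (k * m)) :
    (k : ℤ[i]) ∣ (z.norm : ℤ[i]) := by
  rw [show z.norm = ((k * m : ℕ) : ℤ) from hz]
  push_cast
  exact dvd_mul_right _ _

lemma not_star_dvd_self {π : ℤ[i]} {p : ℕ} (hp : p.Prime) (hp2 : p ≠ 2) (hπ : π.norm = p) :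
    ¬ star π ∣ π := by
  rintro ⟨t, ht⟩
  -- `p = π π̄` divides `π ^ 2`, which forces `p ∣ re π` and `p ∣ im π`, hence `p ^ 2 ∣ p`.
  have hsq : ((p : ℤ) : ℤ[i]) ∣ π ^ 2 :=
    ⟨t, by rw [← hπ, Zsqrtd.norm_eq_mul_conj, sq, mul_assoc, ← ht]⟩
  rw [Zsqrtd.intCast_dvd] at hsq
  have hre : (π ^ 2).re = π.re ^ 2 - π.im ^ 2 := by rw [sq, sq, sq, Zsqrtd.re_mul]; ring
  have hnorm : π.re ^ 2 + π.im ^ 2 = p := by rw [← norm_eq_sq_add_sq, hπ]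
  have hp' : Prime (p : ℤ) := Nat.prime_iff_prime_int.1 hp
  have h2 : ¬ (p : ℤ) ∣ 2 := fun h => hp2 <|
    (Nat.le_of_dvd two_pos (by exact_mod_cast h)).antisymm hp.two_le
  have hdvd : ∀ x : ℤ, (p : ℤ) ∣ 2 * x ^ 2 → (p : ℤ) ∣ x := fun x h =>
    hp'.dvd_of_dvd_pow ((hp'.dvd_or_dvd h).resolve_left h2)
  obtain ⟨r, hr⟩ := hdvd π.re (by
    rw [show 2 * π.re ^ 2 = (π ^ 2).re + p by rw [hre, ← hnorm]; ring]
    exact dvd_add hsq.1 dvd_rfl)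
  obtain ⟨s, hs⟩ := hdvd π.im (by
    rw [show 2 * π.im ^ 2 = p - (π ^ 2).re by rw [hre, ← hnorm]; ring]
    exact dvd_sub dvd_rfl hsq.1)
  have h1 : (p : ℤ) * (p * (r ^ 2 + s ^ 2)) = p * 1 := by
    rw [mul_one]; nth_rw 3 [← hnorm]; rw [hr, hs]; ring
  have := Int.eq_one_of_mul_eq_one_right (by positivity) (mul_left_cancel₀ hp'.ne_zero h1)
  exact hp.one_lt.ne' (by exact_mod_cast this)

lemma r2_two_mul (m : ℕ) : r2 (2 * m) = r2 m := by
  have hπ : (⟨1, 1⟩ : ℤ[i]).norm = 2 := rfl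
  have hprime := prime_of_norm_prime Nat.prime_two hπ
  have hall : normSet (2 * m) = {z ∈ normSet (2 * m) | ⟨1, 1⟩ ∣ z} := by
    refine (Set.sep_eq_self_iff_mem_true.2 fun z hz => ?_).symm
    have h2 : (⟨1, 1⟩ : ℤ[i]) ∣ (2 : ℕ) := ⟨⟨1, -1⟩, rfl⟩
    rcases dvd_or_star_dvd_of_dvd_norm hprime (h2.trans (natCast_dvd_norm_of_mem_normSet hz))
      with h | h
    · exact h
    -- `1 - i = (1 + i) * (-i)`
    · exact (Dvd.intro ⟨0, -1⟩ rfl).trans h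
  rw [r2, hall, ← image_mul_normSet hπ two_ne_zero, ncard_image_mul_normSet hprime.ne_zero]

lemma sep_natCast_dvd_normSet_mul_of_mod_four_eq_three {p : ℕ} (hp : p.Prime)
    (hp3 : p % 4 = 3) (m : ℕ) :
    {z ∈ normSet (p * m) | (p : ℤ[i]) ∣ z} = normSet (p * m) := by
  have := Fact.mk hp
  refine Set.sep_eq_self_iff_mem_true.2 fun z hz => ?_
  simpa using dvd_or_star_dvd_of_dvd_norm (prime_of_nat_prime_of_mod_four_eq_three p hp3)
    (natCast_dvd_norm_of_mem_normSet hz)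

lemma ncard_natCast_dvd_normSet_mul_mul {p : ℕ} (hp : p ≠ 0) (m : ℕ) :
    {z ∈ normSet (p * (p * m)) | (p : ℤ[i]) ∣ z}.ncard = r2 m := by
  have hnorm : (p : ℤ[i]).norm = (p * p : ℕ) := by rw [Zsqrtd.norm_natCast]; push_cast; rfl
  rw [← mul_assoc, ← image_mul_normSet hnorm (mul_ne_zero hp hp),
    ncard_image_mul_normSet (by exact_mod_cast hp)]

lemma natCast_dvd_normSet_mul_eq_empty {p m : ℕ} (hp : p ≠ 0) (hm : ¬ p ∣ m) :
    {z ∈ normSet (p * m) | (p : ℤ[i]) ∣ z} = ∅ :=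
  Set.eq_empty_iff_forall_notMem.2 fun _ hz =>
    hm (dvd_of_natCast_dvd_of_mem_normSet hp hz.1 hz.2)

lemma r2_prime_mul_eq_zero_of_mod_four_eq_three {p m : ℕ} (hp : p.Prime) (hp3 : p % 4 = 3)
    (hm : ¬ p ∣ m) : r2 (p * m) = 0 := by
  rw [r2, ← sep_natCast_dvd_normSet_mul_of_mod_four_eq_three hp hp3,
    natCast_dvd_normSet_mul_eq_empty hp.ne_zero hm, Set.ncard_empty]

lemma r2_prime_sq_mul_of_mod_four_eq_three {p : ℕ} (hp : p.Prime) (hp3 : p % 4 = 3) (m : ℕ) :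
    r2 (p ^ 2 * m) = r2 m := by
  rw [sq, mul_assoc, ← ncard_natCast_dvd_normSet_mul_mul hp.ne_zero m,
    sep_natCast_dvd_normSet_mul_of_mod_four_eq_three hp hp3, r2]

lemma r2_prime_mul_add_ncard_of_mod_four_eq_one {p : ℕ} (hp : p.Prime) (hp1 : p % 4 = 1)
    (m : ℕ) : r2 (p * m) + {z ∈ normSet (p * m) | (p : ℤ[i]) ∣ z}.ncard = 2 * r2 m := by
  have := Fact.mk hp
  obtain ⟨a, b, hab⟩ := Nat.Prime.sq_add_sq (by omega : p % 4 ≠ 3)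
  set π : ℤ[i] := ⟨a, b⟩
  have hπ : π.norm = p := by
    rw [norm_eq_sq_add_sq]; show (a : ℤ) ^ 2 + (b : ℤ) ^ 2 = p; exact_mod_cast hab
  have hπ' : (star π).norm = p := by rw [Zsqrtd.norm_conj, hπ]
  have hπp : π * star π = p := by rw [← Zsqrtd.norm_eq_mul_conj, hπ]; rfl
  have hprime := prime_of_norm_prime hp hπ
  have hnd := not_star_dvd_self hp (by omega) hπ
  have hunion : normSet (p * m) = (π * ·) '' normSet m ∪ (star π * ·) '' normSet m := by
    rw [image_mul_normSet hπ hp.ne_zero, image_mul_normSet hπ' hp.ne_zero, ← Set.sep_or]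
    refine (Set.sep_eq_self_iff_mem_true.2 fun z hz => ?_).symm
    exact dvd_or_star_dvd_of_dvd_norm hprime
      ((Dvd.intro _ hπp).trans (natCast_dvd_norm_of_mem_normSet hz))
  have hinter : (π * ·) '' normSet m ∩ (star π * ·) '' normSet m
      = {z ∈ normSet (p * m) | (p : ℤ[i]) ∣ z} := by
    rw [image_mul_normSet hπ hp.ne_zero, image_mul_normSet hπ' hp.ne_zero, ← Set.sep_and]
    ext z
    refine and_congr_right fun _ => ⟨?_, ?_⟩
    · rintro ⟨⟨s, rfl⟩, h⟩
      obtain ⟨t, rfl⟩ := ((prime_of_norm_prime hp hπ').dvd_or_dvd h).resolve_left hnd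
      exact ⟨t, by rw [← hπp, mul_assoc]⟩
    · rintro ⟨t, rfl⟩
      rw [← hπp]
      exact ⟨⟨star π * t, by ring⟩, ⟨π * t, by ring⟩⟩
  have hπ0 : π ≠ 0 := hprime.ne_zero
  rw [r2, ← hinter, hunion, Set.ncard_union_add_ncard_inter _ _ ((finite_normSet m).image _)
    ((finite_normSet m).image _), ncard_image_mul_normSet hπ0,
    ncard_image_mul_normSet (star_ne_zero.2 hπ0), two_mul]

lemma satisfiesEulerRecursion_r2 :
    SatisfiesEulerRecursion (fun p => χ₄ p) (fun n => (r2 n : ℤ)) where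
  mul_of_not_dvd p m hp hpm := by
    rcases hp.eq_two_or_odd with rfl | hodd
    · simp [r2_two_mul]
    rcases (by omega : p % 4 = 1 ∨ p % 4 = 3) with hp4 | hp4
    · have h := r2_prime_mul_add_ncard_of_mod_four_eq_one hp hp4 m
      rw [natCast_dvd_normSet_mul_eq_empty hp.ne_zero hpm, Set.ncard_empty, add_zero] at h
      rw [χ₄_nat_one_mod_four hp4, h]
      push_cast; ring
    · simp [χ₄_nat_three_mod_four hp4, r2_prime_mul_eq_zero_of_mod_four_eq_three hp hp4 hpm]
  sq_mul p m hp := by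
    rcases hp.eq_two_or_odd with rfl | hodd
    · rw [show 2 ^ 2 * m = 2 * (2 * m) by ring]
      simp [r2_two_mul]
    rcases (by omega : p % 4 = 1 ∨ p % 4 = 3) with hp4 | hp4
    · have h := r2_prime_mul_add_ncard_of_mod_four_eq_one hp hp4 (p * m)
      rw [ncard_natCast_dvd_normSet_mul_mul hp.ne_zero] at h
      rw [χ₄_nat_one_mod_four hp4, sq, mul_assoc, one_mul, one_add_one_eq_two]
      exact_mod_cast h
    · simp [χ₄_nat_three_mod_four hp4, r2_prime_sq_mul_of_mod_four_eq_three hp hp4]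

theorem r2_eq_four_mul_chi4DivisorSum {n : ℕ} (hn : 0 < n) :
    (r2 n : ℤ) = 4 * chi4DivisorSum n :=
  satisfiesEulerRecursion_r2.eq_of_apply_one_eq
    (satisfiesEulerRecursion_chi4DivisorSum.const_mul 4)
    (by simp [r2_one, chi4DivisorSum_apply]) hn

lemma preimage_natAbs_norm (k : ℕ) : (fun z : ℤ[i] => z.norm.natAbs) ⁻¹' {k} = normSet k := by
  ext z
  exact ⟨fun h => by rw [normSet, Set.mem_ofPred_eq, ← abs_natCast_norm, ← h],
    fun h => by simp [show z.norm = k from h]⟩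

theorem card_sum_four_sq_eq_sum_r2_mul_r2 (n : ℕ) :
    Nat.card {x : ℤ × ℤ × ℤ × ℤ // x.1 ^ 2 + x.2.1 ^ 2 + x.2.2.1 ^ 2 + x.2.2.2 ^ 2 = (n : ℤ)}
      = ∑ p ∈ antidiagonal n, r2 p.1 * r2 p.2 := by
  let e : ℤ × ℤ × ℤ × ℤ ≃ ℤ[i] × ℤ[i] :=
    ⟨fun x => (⟨x.1, x.2.1⟩, ⟨x.2.2.1, x.2.2.2⟩), fun q => (q.1.re, q.1.im, q.2.re, q.2.im),
      fun _ => rfl, fun _ => rfl⟩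
  have hfin (k : ℕ) : ((fun z : ℤ[i] => z.norm.natAbs) ⁻¹' {k}).Finite := by
    rw [preimage_natAbs_norm]; exact finite_normSet k
  rw [Nat.card_congr (e.subtypeEquiv (q := fun q => q.1.norm.natAbs + q.2.norm.natAbs = n)
    fun x => ?_), Nat.card_add_eq_sum_antidiagonal _ _ hfin hfin]
  · simp only [preimage_natAbs_norm, r2]
  · zify
    simp only [norm_eq_sq_add_sq, e, Equiv.coe_fn_mk]
    rw [abs_of_nonneg (by positivity), abs_of_nonneg (by positivity), ← add_assoc]

theorem sum_antidiagonal_r2_mul_r2 {n : ℕ} (hn : 0 < n) :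
    ∑ p ∈ antidiagonal n, (r2 p.1 * r2 p.2 : ℤ)
      = 16 * ∑ p ∈ antidiagonal n, chi4DivisorSum p.1 * chi4DivisorSum p.2
        + 8 * chi4DivisorSum n := by
  -- `r2 u = 4 * chi4DivisorSum u` fails only at `u = 0`, so only `(0, n)` and `(n, 0)` contribute.
  rw [← sub_eq_iff_eq_add', mul_sum, ← sum_sub_distrib, sum_eq_add (0, n) (n, 0)]
  · simp only [r2_zero, r2_eq_four_mul_chi4DivisorSum hn, ArithmeticFunction.map_zero,
      Nat.cast_one, one_mul, mul_one, zero_mul, mul_zero, sub_zero]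
    ring
  · simp [hn.ne]
  · rintro ⟨u, v⟩ huv ⟨h0, h1⟩
    rw [HasAntidiagonal.mem_antidiagonal] at huv
    have hu : 0 < u := Nat.pos_of_ne_zero fun hu => h0 (by simp [hu, ← huv])
    have hv : 0 < v := Nat.pos_of_ne_zero fun hv => h1 (by simp [hv, ← huv])
    rw [r2_eq_four_mul_chi4DivisorSum hu, r2_eq_four_mul_chi4DivisorSum hv]
    ring
  · simp
  · simp

end GaussianInt

def prodSumReps (n : ℕ) : Finset ((ℕ × ℕ) × ℕ × ℕ) :=
  (antidiagonal n).biUnion fun uv => uv.1.divisorsAntidiagonal ×ˢ uv.2.divisorsAntidiagonal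

lemma mem_prodSumReps {n : ℕ} {q : (ℕ × ℕ) × ℕ × ℕ} :
    q ∈ prodSumReps n ↔
      0 < q.1.1 ∧ 0 < q.1.2 ∧ 0 < q.2.1 ∧ 0 < q.2.2 ∧ q.1.1 * q.1.2 + q.2.1 * q.2.2 = n := by
  simp only [prodSumReps, mem_biUnion, HasAntidiagonal.mem_antidiagonal, mem_product,
    Nat.mem_divisorsAntidiagonal, Prod.exists]
  constructor
  · rintro ⟨u, v, rfl, ⟨rfl, hu⟩, rfl, hv⟩
    simp only [ne_eq, mul_eq_zero, not_or] at hu hv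
    omega
  · rintro ⟨ha, hx, hb, hy, rfl⟩
    exact ⟨_, _, rfl, ⟨rfl, by positivity⟩, rfl, by positivity⟩

section

variable {M : Type*} [AddCommGroup M] (n : ℕ)

lemma sum_prodSumReps_eq_sum_antidiagonal (f : (ℕ × ℕ) × ℕ × ℕ → M) :
    ∑ q ∈ prodSumReps n, f q = ∑ uv ∈ antidiagonal n,
      ∑ q ∈ uv.1.divisorsAntidiagonal ×ˢ uv.2.divisorsAntidiagonal, f q := by
  refine sum_biUnion fun uv _ uv' _ huv => disjoint_left.2 fun q hq hq' => huv ?_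
  simp only [mem_product, Nat.mem_divisorsAntidiagonal] at hq hq'
  exact Prod.ext (hq.1.1.symm.trans hq'.1.1) (hq.2.1.symm.trans hq'.2.1)

lemma sum_prodSumReps_swap (f : (ℕ × ℕ) × ℕ × ℕ → M) :
    ∑ q ∈ prodSumReps n, f q.swap = ∑ q ∈ prodSumReps n, f q :=
  sum_nbij' Prod.swap Prod.swap (fun q hq => by simp_all [mem_prodSumReps, add_comm])
    (fun q hq => by simp_all [mem_prodSumReps, add_comm]) (fun _ _ => rfl) (fun _ _ => rfl)
    (fun _ _ => rfl)

lemma sum_prodSumReps_sub_left (F : ℕ → ℕ → M) :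
    ∑ q ∈ prodSumReps n, (if q.2.1 < q.1.1 then F (q.1.1 - q.2.1) q.2.1 else 0)
      = ∑ q ∈ prodSumReps n, if q.1.2 < q.2.2 then F q.1.1 q.2.1 else 0 := by
  rw [← sum_filter, ← sum_filter]
  refine sum_nbij' (fun q => ((q.1.1 - q.2.1, q.1.2), (q.2.1, q.2.2 + q.1.2)))
    (fun q => ((q.1.1 + q.2.1, q.1.2), (q.2.1, q.2.2 - q.1.2))) ?_ ?_ ?_ ?_ ?_
  · rintro ⟨⟨a, x⟩, b, y⟩
    simp only [mem_filter, mem_prodSumReps]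
    rintro ⟨⟨ha, hx, hb, hy, h⟩, hba⟩
    obtain ⟨d, rfl⟩ := Nat.exists_eq_add_of_lt hba
    refine ⟨⟨by omega, hx, hb, by omega, ?_⟩, by omega⟩
    rw [show b + d + 1 - b = d + 1 by omega, ← h]
    ring
  · rintro ⟨⟨a, x⟩, b, y⟩
    simp only [mem_filter, mem_prodSumReps]
    rintro ⟨⟨ha, hx, hb, hy, h⟩, hxy⟩
    obtain ⟨d, rfl⟩ := Nat.exists_eq_add_of_lt hxy
    refine ⟨⟨by omega, hx, hb, by omega, ?_⟩, by omega⟩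
    rw [show x + d + 1 - x = d + 1 by omega, ← h]
    ring
  · rintro ⟨⟨a, x⟩, b, y⟩ hq
    simp only [mem_filter] at hq
    simp [Nat.sub_add_cancel hq.2.le]
  · rintro ⟨⟨a, x⟩, b, y⟩ hq
    simp only [mem_filter] at hq
    simp [Nat.sub_add_cancel hq.2.le]
  · intro _ _
    rfl

lemma sum_prodSumReps_sub_right (F : ℕ → ℕ → M) :
    ∑ q ∈ prodSumReps n, (if q.1.1 < q.2.1 then F q.1.1 (q.2.1 - q.1.1) else 0)
      = ∑ q ∈ prodSumReps n, if q.2.2 < q.1.2 then F q.1.1 q.2.1 else 0 := by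
  rw [← sum_prodSumReps_swap, ← sum_prodSumReps_swap n (fun q => if q.2.2 < q.1.2 then _ else _)]
  exact sum_prodSumReps_sub_left n (fun a b => F b a)

lemma sum_prodSumReps_diag (F : ℕ → ℕ → M) :
    ∑ q ∈ prodSumReps n, (if q.1.2 = q.2.2 then F q.1.1 q.2.1 else 0)
      = ∑ c ∈ n.divisors, ∑ a ∈ Ico 1 c, F a (c - a) := by
  rw [← sum_filter, sum_sigma']
  refine sum_nbij' (fun q => ⟨q.1.1 + q.2.1, q.1.1⟩)
    (fun s => ((s.2, n / s.1), (s.1 - s.2, n / s.1))) ?_ ?_ ?_ ?_ ?_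
  · rintro ⟨⟨a, x⟩, b, y⟩
    simp only [mem_filter, mem_prodSumReps, mem_sigma, Nat.mem_divisors, mem_Ico]
    rintro ⟨⟨ha, hx, hb, hy, rfl⟩, rfl⟩
    exact ⟨⟨⟨x, by ring⟩, by positivity⟩, ha, by omega⟩
  · rintro ⟨c, a⟩
    simp only [mem_filter, mem_prodSumReps, mem_sigma, Nat.mem_divisors, mem_Ico]
    rintro ⟨⟨hc, hn⟩, ha, hac⟩
    have hq : 0 < n / c := Nat.div_pos (Nat.le_of_dvd (Nat.pos_of_ne_zero hn) hc) (by omega)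
    refine ⟨⟨ha, hq, by omega, hq, ?_⟩, trivial⟩
    rw [← add_mul, Nat.add_sub_cancel' hac.le, Nat.mul_div_cancel' hc]
  · rintro ⟨⟨a, x⟩, b, y⟩
    simp only [mem_filter, mem_prodSumReps]
    rintro ⟨⟨ha, hx, hb, hy, rfl⟩, rfl⟩
    simp [← add_mul, Nat.mul_div_cancel_left x (by omega : 0 < a + b)]
  · rintro ⟨c, a⟩
    simp only [mem_sigma, mem_Ico]
    rintro ⟨-, -, hac⟩
    simp [Nat.add_sub_cancel' hac.le]
  · intro _ _
    simp

theorem sum_prodSumReps_euclidStep (F : ℕ → ℕ → M) :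
    ∑ q ∈ prodSumReps n, (F q.1.1 q.2.1 - (if q.2.1 < q.1.1 then F (q.1.1 - q.2.1) q.2.1 else 0)
      - (if q.1.1 < q.2.1 then F q.1.1 (q.2.1 - q.1.1) else 0))
      = ∑ c ∈ n.divisors, ∑ a ∈ Ico 1 c, F a (c - a) := by
  have hsplit : ∀ q : (ℕ × ℕ) × ℕ × ℕ,
      F q.1.1 q.2.1 = (if q.1.2 < q.2.2 then F q.1.1 q.2.1 else 0)
      + (if q.2.2 < q.1.2 then F q.1.1 q.2.1 else 0)
      + (if q.1.2 = q.2.2 then F q.1.1 q.2.1 else 0) := by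
    intro q
    rcases lt_trichotomy q.1.2 q.2.2 with h | h | h
    · simp [h, h.ne, h.not_gt]
    · simp [h]
    · simp [h, h.ne', h.not_gt]
  rw [sum_sub_distrib, sum_sub_distrib, sum_prodSumReps_sub_left, sum_prodSumReps_sub_right,
    ← sum_prodSumReps_diag, sum_congr rfl fun q _ => hsplit q, sum_add_distrib, sum_add_distrib]
  abel

end

/-- `chi4PartialSum k = ∑_{0 ≤ j ≤ k} χ₄ j`, which only depends on `k` mod 4. -/
def chi4PartialSum (k : ZMod 4) : ℤ := if k = 1 ∨ k = 2 then 1 else 0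

lemma chi4_mul_eq_chi4PartialSum_sub (a b : ℕ) :
    χ₄ (a * b : ℕ) = chi4PartialSum (a * b)
      - (if b < a then chi4PartialSum ((a - b : ℕ) * b) else 0)
      - (if a < b then chi4PartialSum (a * (b - a : ℕ)) else 0) := by
  have hstep : ∀ x y : ZMod 4,
      χ₄ (x * y) = chi4PartialSum (x * y) - chi4PartialSum ((x - y) * y) := by
    decide
  rcases lt_trichotomy a b with h | rfl | h
  · rw [if_neg h.not_gt, if_pos h, sub_zero, Nat.cast_mul, Nat.cast_sub h.le,
      mul_comm (a : ZMod 4), hstep, mul_comm (a : ZMod 4), mul_comm _ (a : ZMod 4)]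
  · have hdiag : ∀ x : ZMod 4, χ₄ (x * x) = chi4PartialSum (x * x) := by decide
    simp [hdiag]
  · rw [if_pos h, if_neg h.not_gt, sub_zero, Nat.cast_mul, Nat.cast_sub h.le, hstep]

lemma two_mul_sum_chi4PartialSum (c : ℕ) :
    2 * ∑ a ∈ Ico 1 c, chi4PartialSum (a * (c - a : ℕ))
      = (if 4 ∣ c then 0 else (c : ℤ)) - χ₄ c := by
  induction c using Nat.strong_induction_on with
  | _ c ih =>
  rcases lt_or_ge c 5 with hc | hc
  · interval_cases c <;> decide
  -- Passing from `c` to `c + 4` leaves the terms `a < c` unchanged mod 4 and adds four new ones.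
  obtain ⟨c, rfl⟩ : ∃ m, c = m + 4 := ⟨c - 4, by omega⟩
  have h4 : ((4 : ℕ) : ZMod 4) = 0 := rfl
  have hper : ∑ a ∈ Ico 1 c, chi4PartialSum (a * (c + 4 - a : ℕ))
      = ∑ a ∈ Ico 1 c, chi4PartialSum (a * (c - a : ℕ)) := by
    refine sum_congr rfl fun a ha => ?_
    rw [mem_Ico] at ha
    rw [show c + 4 - a = c - a + 4 by omega, Nat.cast_add, h4, add_zero]
  have hlast : ∀ x : ZMod 4, 2 * (chi4PartialSum (x * 4) + chi4PartialSum ((x + 1) * 3)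
      + chi4PartialSum ((x + 2) * 2) + chi4PartialSum ((x + 3) * 1)) = if x = 0 then 0 else 4 := by
    decide
  rw [← sum_Ico_consecutive _ (by omega : 1 ≤ c) (by omega : c ≤ c + 4), hper, mul_add,
    ih c (by omega), sum_Ico_eq_sum_range, Nat.add_sub_cancel_left]
  simp only [Nat.dvd_add_self_right, sum_range_succ, sum_range_zero, zero_add, Nat.add_sub_add_left]
  push_cast
  rw [add_zero, hlast, show (4 : ZMod 4) = 0 from rfl, add_zero]
  by_cases h : 4 ∣ c
  · rw [if_pos h, if_pos h, if_pos ((ZMod.natCast_eq_zero_iff c 4).2 h)]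
    ring
  · rw [if_neg h, if_neg h, if_neg (mt (ZMod.natCast_eq_zero_iff c 4).1 h)]
    ring

theorem sum_antidiagonal_chi4DivisorSum_mul (n : ℕ) :
    ∑ p ∈ antidiagonal n, chi4DivisorSum p.1 * chi4DivisorSum p.2
      = ∑ q ∈ prodSumReps n, χ₄ (q.1.1 * q.2.1 : ℕ) := by
  rw [sum_prodSumReps_eq_sum_antidiagonal]
  refine sum_congr rfl fun p _ => ?_
  rw [chi4DivisorSum_apply, chi4DivisorSum_apply,
    ← Nat.sum_divisorsAntidiagonal (fun d _ => χ₄ d),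
    ← Nat.sum_divisorsAntidiagonal (fun d _ => χ₄ d),
    sum_mul_sum, ← sum_product']
  exact sum_congr rfl fun q _ => by rw [Nat.cast_mul, map_mul]

theorem two_mul_sum_prodSumReps_chi4 (n : ℕ) :
    2 * ∑ q ∈ prodSumReps n, χ₄ (q.1.1 * q.2.1 : ℕ)
      = ∑ d ∈ n.divisors.filter (fun d => ¬ 4 ∣ d), (d : ℤ) - chi4DivisorSum n := by
  simp_rw [chi4_mul_eq_chi4PartialSum_sub]
  rw [sum_prodSumReps_euclidStep n (fun a b => chi4PartialSum (a * b)), mul_sum]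
  simp_rw [two_mul_sum_chi4PartialSum]
  rw [sum_sub_distrib, sum_filter, chi4DivisorSum_apply]
  simp_rw [ite_not]

theorem jacobi_four_squares (n : ℕ) (hn : 0 < n) :
    Nat.card {x : ℤ × ℤ × ℤ × ℤ //
        x.1 ^ 2 + x.2.1 ^ 2 + x.2.2.1 ^ 2 + x.2.2.2 ^ 2 = (n : ℤ)}
      = 8 * ∑ d ∈ n.divisors.filter (fun d => ¬ (4 ∣ d)), d := by
  have hliouville := two_mul_sum_prodSumReps_chi4 n
  rw [← sum_antidiagonal_chi4DivisorSum_mul] at hliouville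
  rw [← Nat.cast_inj (R := ℤ), GaussianInt.card_sum_four_sq_eq_sum_r2_mul_r2, Nat.cast_mul,
    Nat.cast_sum, Nat.cast_sum]
  simp only [Nat.cast_mul]
  rw [GaussianInt.sum_antidiagonal_r2_mul_r2 hn]
  linear_combination 8 * hliouville
end

section
/- For every positive integer n, the coefficient of q^n in 1 + 8·Σ_{k=1}^∞ q^k/(1+(-q)^k)^2 equals 8 times Σ_{d | n, 4 ∤ d} d. -/
open Finset PowerSeries

/-
Expanding `X / (1 - c X)² = ∑ m cᵐ⁻¹ Xᵐ` at `X ↦ X^k` with `c = (-1)^(k+1)` gives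
`q^k / (1 + (-q)^k)² = ∑ₘ m (-1)^((k+1)(m-1)) q^(km)`, so the coefficient of `qⁿ` is
`∑_{d ∣ n} d ε(d)` with `ε(d) = -1` exactly when both `d` and `n/d` are even. Those divisors
contribute `d - 2d` instead of `d`, and `d ↦ 2d` maps them bijectively onto the divisors divisible by `4`.
-/

namespace PowerSeries

theorem mk_mul_pow_pred_mul_one_sub_C_mul_X_sq {R : Type*} [CommRing R] (c : R) :
    (mk fun m => (m : R) * c ^ (m - 1)) * (1 - C c * X) ^ 2 = X := by
  have hmk : (mk fun m => (m : R) * c ^ (m - 1))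
      = X * rescale c (mk fun m => ((1 + m).choose 1 : R)) := by
    ext (_ | m) <;> simp [coeff_succ_X_mul, add_comm, mul_comm]
  have hinv := congrArg (rescale c) (mk_add_choose_mul_one_sub_pow_eq_one R 1)
  rw [map_mul, map_pow, map_sub, map_one, rescale_X, one_add_one_eq_two] at hinv
  rw [hmk, mul_assoc, hinv, mul_one]

variable {K : Type*} [Field K]

theorem X_pow_mul_inv_one_sub_C_mul_X_pow_sq (c : K) {k : ℕ} (hk : k ≠ 0) :
    X ^ k * ((1 - C c * X ^ k) ^ 2)⁻¹ = expand k hk (mk fun m => (m : K) * c ^ (m - 1)) := by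
  have h := congrArg (expand k hk) (mk_mul_pow_pred_mul_one_sub_C_mul_X_sq c)
  rw [map_mul, map_pow, map_sub, map_one, map_mul, expand_C, expand_X] at h
  rw [eq_comm, eq_mul_inv_iff_mul_eq (by simp [hk]), h]

theorem coeff_X_pow_mul_inv_one_sub_C_mul_X_pow_sq (c : K) {k : ℕ} (hk : k ≠ 0) (n : ℕ) :
    coeff n (X ^ k * ((1 - C c * X ^ k) ^ 2)⁻¹)
      = if k ∣ n then ((n / k : ℕ) : K) * c ^ (n / k - 1) else 0 := by
  rw [X_pow_mul_inv_one_sub_C_mul_X_pow_sq c hk, coeff_expand, coeff_mk]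

theorem one_add_neg_X_pow (k : ℕ) : (1 + (-X) ^ k : K⟦X⟧) = 1 - C ((-1) ^ (k + 1)) * X ^ k := by
  simp [neg_pow X, pow_succ]

end PowerSeries

namespace Nat

theorem sum_divisors_filter_four_dvd {M : Type*} [AddCommMonoid M] (f : ℕ → M) (n : ℕ) :
    ∑ e ∈ n.divisors with 4 ∣ e, f e = ∑ d ∈ n.divisors with 2 ∣ d ∧ 2 ∣ n / d, f (2 * d) := by
  symm
  refine sum_nbij' (2 * ·) (· / 2) ?_ ?_ (by simp) ?_ (by simp)
  · simp only [mem_filter, mem_divisors]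
    rintro d ⟨⟨hdn, hn⟩, h2d, h2nd⟩
    rw [Nat.dvd_div_iff_mul_dvd hdn, mul_comm] at h2nd
    exact ⟨⟨h2nd, hn⟩, by omega⟩
  · simp only [mem_filter, mem_divisors]
    rintro e ⟨⟨hen, hn⟩, h4e⟩
    obtain ⟨d, rfl⟩ : 2 ∣ e := dvd_trans (by norm_num) h4e
    have hdn : d ∣ n := dvd_of_mul_left_dvd hen
    simp only [Nat.mul_div_cancel_left d two_pos]
    exact ⟨⟨hdn, hn⟩, by omega, (Nat.dvd_div_iff_mul_dvd hdn).2 (mul_comm d 2 ▸ hen)⟩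
  · simp only [mem_filter, mem_divisors]
    rintro e ⟨-, h4e⟩
    omega

variable {R : Type*} [CommRing R]

theorem neg_one_pow_mul_sub_one_of_dvd {n d : ℕ} (hd : d ∣ n) (hn : n ≠ 0) :
    (-1 : R) ^ ((n / d + 1) * (d - 1)) = if 2 ∣ d ∧ 2 ∣ n / d then -1 else 1 := by
  have hd0 : 1 ≤ d := Nat.pos_of_dvd_of_pos hd (Nat.pos_of_ne_zero hn)
  split_ifs with h
  · exact Odd.neg_one_pow (Nat.odd_mul.2 ⟨by grind, by grind⟩)
  · exact Even.neg_one_pow (Nat.even_mul.2 (by grind))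

theorem sum_divisors_mul_neg_one_pow {n : ℕ} (hn : n ≠ 0) :
    ∑ d ∈ n.divisors, (d : R) * (-1) ^ ((n / d + 1) * (d - 1))
      = ∑ d ∈ n.divisors with ¬ 4 ∣ d, (d : R) := by
  calc ∑ d ∈ n.divisors, (d : R) * (-1) ^ ((n / d + 1) * (d - 1))
      = ∑ d ∈ n.divisors, (d : R) - ∑ d ∈ n.divisors with 2 ∣ d ∧ 2 ∣ n / d, ((2 * d : ℕ) : R) := by
        rw [sum_filter, ← sum_sub_distrib]
        refine sum_congr rfl fun d hd => ?_
        rw [neg_one_pow_mul_sub_one_of_dvd (mem_divisors.1 hd).1 hn]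
        split_ifs <;> push_cast <;> ring
    _ = ∑ d ∈ n.divisors, (d : R) - ∑ e ∈ n.divisors with 4 ∣ e, (e : R) := by
        rw [sum_divisors_filter_four_dvd]
    _ = ∑ d ∈ n.divisors with ¬ 4 ∣ d, (d : R) := by
        rw [← sum_filter_add_sum_filter_not n.divisors (4 ∣ ·)]
        ring

end Nat

theorem coeff_psSum_eq_sum_divisors {n : ℕ} (hn : n ≠ 0) :
    coeff n (psSum fun k => Q ^ k * ((1 + (-Q) ^ k) ^ 2)⁻¹)
      = ∑ d ∈ n.divisors, (d : ℚ) * (-1) ^ ((n / d + 1) * (d - 1)) := by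
  have hterm : ∀ k ∈ Icc 1 n, coeff n (Q ^ k * ((1 + (-Q) ^ k) ^ 2)⁻¹)
      = if k ∣ n then ((n / k : ℕ) : ℚ) * (-1) ^ ((k + 1) * (n / k - 1)) else 0 := fun k hk => by
    rw [Q, one_add_neg_X_pow, coeff_X_pow_mul_inv_one_sub_C_mul_X_pow_sq _ (by grind), pow_mul]
  have hdiv : {k ∈ Icc 1 n | k ∣ n} = n.divisors := by
    ext k
    simp only [mem_filter, mem_Icc, Nat.mem_divisors]
    grind [Nat.le_of_dvd, Nat.pos_of_dvd_of_pos]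
  rw [psSum, coeff_mk, sum_congr rfl hterm, ← sum_filter, hdiv, ← Nat.sum_div_divisors]
  refine sum_congr rfl fun d hd => ?_
  rw [Nat.div_div_self (Nat.mem_divisors.1 hd).1 hn]

theorem coeff_rhs_eq_divisor_sum (n : ℕ) (hn : 0 < n) :
    PowerSeries.coeff n (1 + 8 * psSum (fun k => Q ^ k * ((1 + (-Q) ^ k) ^ 2)⁻¹))
      = 8 * ∑ d ∈ n.divisors.filter (fun d => ¬ (4 ∣ d)), (d : ℚ) := by
  rw [map_add, coeff_one, if_neg hn.ne', zero_add, ← map_ofNat C, coeff_C_mul,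
    coeff_psSum_eq_sum_divisors hn.ne', Nat.sum_divisors_mul_neg_one_pow hn.ne']
end
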